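/- Let A : Γ^∞(F) → C^∞(M) be an ℝ-linear map. Then there exists a smooth section α of the dual bundle F* → M such that A(X)(x) = α(x)(X(x)) for all X ∈ Γ^∞(F) and all x ∈ M, if and only if A is C^∞(M)-linear, i.e. A(f·X) = f·A(X) for all f ∈ C^∞(M) and X ∈ Γ^∞(F). Moreover, such a section α is unique when it exists. -/

import Mathlib

/-!
Fix `x₀`, a trivialization `e` around it with local frame `sᵢ` and coefficient functionals `cᵢ`,
and a bump function `χ` supported in its base set with `χ = 1` near `x₀`. Then
`χ² • X = ∑ᵢ (χ · cᵢ(X)) • (χ • sᵢ)` holds globally, with every factor a global smooth object, so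
`C^∞(M)`-linearity gives `A X = ∑ᵢ cᵢ(X) · A(χ • sᵢ)` wherever `χ = 1`. Thus `A X x` depends only
on `X x`, linearly, which defines `α x`; and in the trivialization `e` the coordinates of `α` are
the smooth functions `A(χ • sᵢ)`, so `α` is smooth. Uniqueness holds because every vector is the
value of a global smooth section.
-/

noncomputable section

open Bundle
open scoped Manifold Topology ContDiff

section

variable {EB : Type*} [NormedAddCommGroup EB] [NormedSpace ℝ EB]
  {HB : Type*} [TopologicalSpace HB] {IB : ModelWithCorners ℝ EB HB}
  {M : Type*} [TopologicalSpace M] [ChartedSpace HB M] {n : ℕ∞ω}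
  {F : Type*} [NormedAddCommGroup F] [NormedSpace ℝ F]
  {V : M → Type*} [∀ x, AddCommGroup (V x)] [∀ x, Module ℝ (V x)] [∀ x, TopologicalSpace (V x)]
  [TopologicalSpace (TotalSpace F V)] [FiberBundle F V] [VectorBundle ℝ F V]

theorem exists_contMDiffMap_tsupport_subset_eventuallyEq_one [FiniteDimensional ℝ EB]
    [IsManifold IB ∞ M] [T2Space M] {x₀ : M} {U : Set M} (hU : U ∈ 𝓝 x₀) :
    ∃ χ : C^∞⟮IB, M; ℝ⟯, tsupport χ ⊆ U ∧ χ =ᶠ[𝓝 x₀] 1 := by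
  obtain ⟨f, -, hf⟩ := (SmoothBumpFunction.nhds_basis_tsupport (I := IB) x₀).mem_iff.1 hU
  exact ⟨⟨f, f.contMDiff⟩, hf, f.eventuallyEq_one⟩

theorem ContMDiffOn.smul_of_tsupport {G : Type*} [NormedAddCommGroup G] [NormedSpace ℝ G]
    {χ : M → ℝ} {g : M → G} {U : Set M} (hχ : CMDiff[U] n χ) (hU : IsOpen U)
    (hχU : tsupport χ ⊆ U) (hg : CMDiff[U] n g) : CMDiff n (χ • g) :=
  contMDiff_of_tsupport fun x hx ↦
    have hxU : x ∈ U := hχU (tsupport_smul_subset_left _ _ hx)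
    ((hχ.smul hg) x hxU).contMDiffAt (hU.mem_nhds hxU)

def ContMDiffMap.smulSection (f : C^n⟮IB, M; ℝ⟯) (X : Cₛ^n⟮IB; F, V⟯) :
    Cₛ^n⟮IB; F, V⟯ :=
  ⟨⇑f • ⇑X, f.contMDiff.smul_section X.contMDiff⟩

@[simp]
theorem ContMDiffMap.smulSection_apply (f : C^n⟮IB, M; ℝ⟯) (X : Cₛ^n⟮IB; F, V⟯)
    (x : M) : f.smulSection X x = f x • X x :=
  rfl

def ContMDiffMap.cutoffSection (χ : C^n⟮IB, M; ℝ⟯) {U : Set M} (hU : IsOpen U)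
    (hχ : tsupport χ ⊆ U) (σ : Π x, V x) (hσ : CMDiff[U] n (T% σ)) : Cₛ^n⟮IB; F, V⟯ :=
  ⟨⇑χ • σ, χ.contMDiff.contMDiffOn.smul_section_of_tsupport hU hχ hσ⟩

def IsSmoothFunctionLinear (A : Cₛ^∞⟮IB; F, V⟯ →ₗ[ℝ] C^∞⟮IB, M; ℝ⟯) : Prop :=
  ∀ (f : C^∞⟮IB, M; ℝ⟯) (X Y : Cₛ^∞⟮IB; F, V⟯), (∀ x, Y x = f x • X x) → A Y = f * A X

theorem contMDiffAt_dual_section_of_eventuallyEq {α : Π x, V x →L[ℝ] Trivial M ℝ x} {x₀ : M}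
    {g : M → F →L[ℝ] ℝ} (hg : CMDiffAt n g x₀)
    (hαg : ∀ᶠ y in 𝓝 x₀, ∀ w, α y ((trivializationAt F V x₀).symm y w) = g y w) :
    CMDiffAt n (fun y ↦ TotalSpace.mk' (F →L[ℝ] ℝ)
      (E := fun x ↦ V x →L[ℝ] Trivial M ℝ x) y (α y)) x₀ := by
  rw [contMDiffAt_hom_bundle]
  refine ⟨contMDiffAt_id, hg.congr_of_eventuallyEq ?_⟩
  filter_upwards [hαg, (trivializationAt F V x₀).open_baseSet.mem_nhds
    (mem_baseSet_trivializationAt F V x₀)] with y hy hyx₀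
  ext w
  simp [ContinuousLinearMap.inCoordinates, Trivialization.symmL_apply _ hyx₀, hy]

variable {A : Cₛ^∞⟮IB; F, V⟯ →ₗ[ℝ] C^∞⟮IB, M; ℝ⟯} [ContMDiffVectorBundle ∞ F V IB]

def Bundle.Trivialization.cutoffFrame (e : Trivialization F (π F V)) [MemTrivializationAtlas e]
    {ι : Type*} (b : Module.Basis ι ℝ F) (χ : C^∞⟮IB, M; ℝ⟯) (hχ : tsupport χ ⊆ e.baseSet)
    (i : ι) : Cₛ^∞⟮IB; F, V⟯ :=
  χ.cutoffSection e.open_baseSet hχ (e.localFrame b i) (e.contMDiffOn_localFrame_baseSet ∞ b i)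

theorem Bundle.Trivialization.cutoffFrame_apply (e : Trivialization F (π F V))
    [MemTrivializationAtlas e] {ι : Type*} (b : Module.Basis ι ℝ F) (χ : C^∞⟮IB, M; ℝ⟯)
    (hχ : tsupport χ ⊆ e.baseSet) (i : ι) (x : M) :
    e.cutoffFrame b χ hχ i x = χ x • e.localFrame b i x :=
  rfl

theorem Bundle.Trivialization.mul_self_smul_eq_sum_smul_cutoffFrame
    (e : Trivialization F (π F V)) [MemTrivializationAtlas e] {ι : Type*} [Fintype ι]
    (b : Module.Basis ι ℝ F) {χ : C^∞⟮IB, M; ℝ⟯} (hχ : tsupport χ ⊆ e.baseSet) (σ : Π x, V x)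
    (z : M) : (χ z * χ z) • σ z =
      ∑ i, (χ z * e.localFrameCoeff IB b i z (σ z)) • e.cutoffFrame b χ hχ i z := by
  by_cases hz : z ∈ e.baseSet
  · conv_lhs => rw [e.eq_sum_localFrameCoeff_smul (I := IB) (b := b) (s := σ) hz, Finset.smul_sum]
    refine Finset.sum_congr rfl fun i _ ↦ ?_
    rw [e.cutoffFrame_apply, smul_smul, smul_smul]
    ring_nf
  · have hχz : χ z = 0 := image_eq_zero_of_notMem_tsupport fun h ↦ hz (hχ h)
    simp [hχz]

theorem IsSmoothFunctionLinear.apply_eq_sum_localFrameCoeff_mul [FiniteDimensional ℝ F]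
    (hA : IsSmoothFunctionLinear A) {e : Trivialization F (π F V)} [MemTrivializationAtlas e] {ι : Type*} [Fintype ι]
    (b : Module.Basis ι ℝ F) {χ : C^∞⟮IB, M; ℝ⟯} (hχ : tsupport χ ⊆ e.baseSet)
    (X : Cₛ^∞⟮IB; F, V⟯) {y : M} (hy : χ y = 1) :
    A X y = ∑ i, e.localFrameCoeff IB b i y (X y) * A (e.cutoffFrame b χ hχ i) y := by
  set s := e.cutoffFrame b χ hχ
  let c (i : ι) : C^∞⟮IB, M; ℝ⟯ :=
    ⟨⇑χ • LinearMap.piApply (e.localFrameCoeff IB b i) ⇑X,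
      χ.contMDiff.contMDiffOn.smul_of_tsupport e.open_baseSet hχ
        (contMDiffOn_baseSet_localFrameCoeff b X.contMDiff.contMDiffOn i)⟩
  have hc (i : ι) (z : M) : c i z = χ z * e.localFrameCoeff IB b i z (X z) := rfl
  have hsum (z : M) : (∑ i, (c i).smulSection (s i)) z = (χ * χ) z • X z := by
    rw [show (χ * χ) z = χ z * χ z from rfl, e.mul_self_smul_eq_sum_smul_cutoffFrame b hχ,
      ← ContMDiffSection.coeAddHom_apply, map_sum, Finset.sum_apply]
    rfl
  have hterm (i : ι) : A ((c i).smulSection (s i)) y = c i y * A (s i) y :=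
    congr($(hA _ _ _ fun _ ↦ rfl) y)
  have hAsum : ∑ i, A ((c i).smulSection (s i)) y = χ y * χ y * A X y :=
    calc ∑ i, A ((c i).smulSection (s i)) y = A (∑ i, (c i).smulSection (s i)) y := by
          rw [map_sum]; exact (map_sum (ContMDiffMap.evalRingHom y) _ _).symm
      _ = χ y * χ y * A X y := congr($(hA (χ * χ) X _ hsum) y)
  simp only [hterm] at hAsum
  simpa [hc, hy] using hAsum.symm

variable [FiniteDimensional ℝ EB] [IsManifold IB ∞ M] [T2Space M]

theorem exists_contMDiffSection_apply_eq {x : M} (v : V x) : ∃ X : Cₛ^∞⟮IB; F, V⟯, X x = v := by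
  obtain ⟨U, hU, hextend⟩ := FiberBundle.exists_contMDiffOn_extend IB F (k := ∞) v
  obtain ⟨χ, hχ, hχ1⟩ :=
    exists_contMDiffMap_tsupport_subset_eventuallyEq_one (IB := IB) (interior_mem_nhds.2 hU)
  exact ⟨χ.cutoffSection isOpen_interior hχ _ (hextend.mono interior_subset),
    by simp [ContMDiffMap.cutoffSection, hχ1.self_of_nhds]⟩

variable (IB F) in
def extendSection {x : M} (v : V x) : Cₛ^∞⟮IB; F, V⟯ :=
  (exists_contMDiffSection_apply_eq v).choose

@[simp]
theorem extendSection_apply_self {x : M} (v : V x) : extendSection IB F v x = v :=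
  (exists_contMDiffSection_apply_eq v).choose_spec

variable [FiniteDimensional ℝ F]

theorem IsSmoothFunctionLinear.apply_congr (hA : IsSmoothFunctionLinear A)
    {X Y : Cₛ^∞⟮IB; F, V⟯} {x : M} (h : X x = Y x) : A X x = A Y x := by
  obtain ⟨χ, hχ, hχ1⟩ := exists_contMDiffMap_tsupport_subset_eventuallyEq_one (IB := IB)
    ((trivializationAt F V x).open_baseSet.mem_nhds (mem_baseSet_trivializationAt F V x))
  rw [hA.apply_eq_sum_localFrameCoeff_mul (Module.finBasis ℝ F) hχ X hχ1.self_of_nhds,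
    hA.apply_eq_sum_localFrameCoeff_mul (Module.finBasis ℝ F) hχ Y hχ1.self_of_nhds, h]

variable [∀ x, IsTopologicalAddGroup (V x)] [∀ x, ContinuousSMul ℝ (V x)]

def IsSmoothFunctionLinear.toDual (hA : IsSmoothFunctionLinear A) (x : M) : V x →L[ℝ] ℝ :=
  have : T2Space (V x) := FiberBundle.t2Space F V x
  have : FiniteDimensional ℝ (V x) := VectorBundle.finiteDimensional ℝ F V x
  LinearMap.toContinuousLinearMap
    { toFun v := A (extendSection IB F v) x
      map_add' v w := by
        rw [hA.apply_congr (Y := extendSection IB F v + extendSection IB F w) (by simp), map_add]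
        rfl
      map_smul' c v := by
        rw [hA.apply_congr (Y := c • extendSection IB F v) (by simp), map_smul]
        rfl }

theorem IsSmoothFunctionLinear.toDual_apply (hA : IsSmoothFunctionLinear A)
    (X : Cₛ^∞⟮IB; F, V⟯) (x : M) : hA.toDual x (X x) = A X x :=
  hA.apply_congr (extendSection_apply_self (X x))

theorem IsSmoothFunctionLinear.contMDiff_toDual (hA : IsSmoothFunctionLinear A) :
    CMDiff ∞ (fun y ↦ TotalSpace.mk' (F →L[ℝ] ℝ)
      (E := fun x ↦ V x →L[ℝ] Trivial M ℝ x) y (hA.toDual y)) := by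
  intro x₀
  set e := trivializationAt F V x₀
  set b := Module.finBasis ℝ F
  obtain ⟨χ, hχ, hχ1⟩ := exists_contMDiffMap_tsupport_subset_eventuallyEq_one (IB := IB)
    (e.open_baseSet.mem_nhds (mem_baseSet_trivializationAt F V x₀))
  refine contMDiffAt_dual_section_of_eventuallyEq
    (g := fun y ↦ ∑ i, A (e.cutoffFrame b χ hχ i) y • (b.coord i).toContinuousLinearMap)
    (ContMDiff.sum fun i _ ↦ (A _).contMDiff.smul contMDiff_const).contMDiffAt ?_
  filter_upwards [hχ1, e.open_baseSet.mem_nhds (mem_baseSet_trivializationAt F V x₀)]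
    with y hy hye w
  rw [← extendSection_apply_self (IB := IB) (F := F) (e.symm y w), hA.toDual_apply,
    hA.apply_eq_sum_localFrameCoeff_mul b hχ _ hy]
  have hcoeff (i) : e.localFrameCoeff IB b i y (e.symm y w) = b.repr w i := by
    simpa [Trivialization.basisAt, hye] using
      e.localFrameCoeff_apply_of_mem_baseSet b hye (fun z ↦ e.symm z w) i
  simp [hcoeff, mul_comm]

end

-- `V` is the bundle called `F` in the informal statement, and `F` is its model fiber.
variable
  {EB : Type*} [NormedAddCommGroup EB] [NormedSpace ℝ EB] [FiniteDimensional ℝ EB]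
  {HB : Type*} [TopologicalSpace HB]
  {IB : ModelWithCorners ℝ EB HB} [IB.Boundaryless]
  {M : Type*} [TopologicalSpace M] [ChartedSpace HB M] [IsManifold IB (⊤ : ℕ∞) M]
  [T2Space M] [SigmaCompactSpace M]
  {F : Type*} [NormedAddCommGroup F] [NormedSpace ℝ F] [FiniteDimensional ℝ F]
  {V : M → Type*} [∀ x, AddCommGroup (V x)] [∀ x, Module ℝ (V x)]
  [∀ x, TopologicalSpace (V x)] [∀ x, IsTopologicalAddGroup (V x)]
  [∀ x, ContinuousSMul ℝ (V x)]
  [TopologicalSpace (Bundle.TotalSpace F V)] [FiberBundle F V] [VectorBundle ℝ F V]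
  [ContMDiffVectorBundle (⊤ : ℕ∞) F V IB]

/-- localization lemma: an `ℝ`-linear map `A : Γ^∞(F) → C^∞(M)` is induced
by a (necessarily unique) smooth section `α` of the dual bundle `F* → M`, via
`A(X)(x) = α(x)(X(x))`, if and only if `A` is `C^∞(M)`-linear. -/
theorem stmt17 (A : Cₛ^(⊤ : ℕ∞)⟮IB; F, V⟯ →ₗ[ℝ] C^(⊤ : ℕ∞)⟮IB, M; ℝ⟯) :
    ((∃ α : Cₛ^(⊤ : ℕ∞)⟮IB; F →L[ℝ] ℝ,
          (fun x ↦ V x →SL[RingHom.id ℝ] Bundle.Trivial M ℝ x)⟯,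
        ∀ (X : Cₛ^(⊤ : ℕ∞)⟮IB; F, V⟯) (x : M), A X x = α x (X x)) ↔
      (∀ (f : C^(⊤ : ℕ∞)⟮IB, M; ℝ⟯) (X Y : Cₛ^(⊤ : ℕ∞)⟮IB; F, V⟯),
        (∀ x : M, Y x = f x • X x) → A Y = f * A X)) ∧
    (∀ α β : Cₛ^(⊤ : ℕ∞)⟮IB; F →L[ℝ] ℝ,
          (fun x ↦ V x →SL[RingHom.id ℝ] Bundle.Trivial M ℝ x)⟯,
        (∀ (X : Cₛ^(⊤ : ℕ∞)⟮IB; F, V⟯) (x : M), A X x = α x (X x)) →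
        (∀ (X : Cₛ^(⊤ : ℕ∞)⟮IB; F, V⟯) (x : M), A X x = β x (X x)) →
        α = β) := by
  refine ⟨⟨?_, fun (hA : IsSmoothFunctionLinear A) ↦ ?_⟩, ?_⟩
  · rintro ⟨α, hα⟩ f X Y hY
    ext x
    simp [hα, hY]
  · exact ⟨⟨hA.toDual, hA.contMDiff_toDual⟩, fun X x ↦ (hA.toDual_apply X x).symm⟩
  · intro α β hα hβ
    ext x v
    rw [← extendSection_apply_self (IB := IB) (F := F) v, ← hα, hβ]
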